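/- arXiv:0812.2719 — 3 statements merged into one kernel-verified Lean document; each statement's English description precedes it below -/
import Mathlib

section
/- For all real numbers x, y with 0 ≤ x ≤ 1 and 0 ≤ y ≤ 1, and every positive integer k, (1 - x·y)^k ≤ 1 - x + e^{-k·y}. -/
/-! Write `1 - x y = x (1 - y) + (1 - x) · 1` as a convex combination of `1 - y` and `1`: convexity
of `t ↦ t ^ k` on `[0, ∞)` gives `(1 - x y) ^ k ≤ (1 - x) + x (1 - y) ^ k`, and
`(1 - y) ^ k ≤ e ^ {-k y}` since `1 - y ≤ e ^ {-y}`. -/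

open Real

lemma pow_one_sub_mul_le {x t : ℝ} (hx0 : 0 ≤ x) (hx1 : x ≤ 1) (ht : 0 ≤ t) (n : ℕ) :
    (1 - x + x * t) ^ n ≤ 1 - x + x * t ^ n := by
  have h := (convexOn_pow n).2 (Set.mem_Ici.2 ht) (Set.mem_Ici.2 zero_le_one) hx0
    (sub_nonneg.2 hx1) (add_sub_cancel x 1)
  simp only [smul_eq_mul, mul_one, one_pow] at h
  rwa [add_comm (x * t), add_comm (x * t ^ n)] at h

lemma one_sub_pow_le_exp_neg_mul {y : ℝ} (hy : y ≤ 1) (n : ℕ) :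
    (1 - y) ^ n ≤ exp (-(n : ℝ) * y) :=
  calc (1 - y) ^ n ≤ exp (-y) ^ n :=
        pow_le_pow_left₀ (sub_nonneg.2 hy) (by linarith [add_one_le_exp (-y)]) n
    _ = exp (-(n : ℝ) * y) := by rw [← exp_nat_mul]; ring_nf

theorem stmt_0_general (x y : ℝ) (hx0 : 0 ≤ x) (hx1 : x ≤ 1) (hy1 : y ≤ 1)
    (k : ℕ) :
    (1 - x * y) ^ k ≤ 1 - x + Real.exp (-(k : ℝ) * y) := by
  have hconvex : (1 - x * y) ^ k ≤ 1 - x + x * (1 - y) ^ k := by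
    convert pow_one_sub_mul_le hx0 hx1 (sub_nonneg.2 hy1) k using 2
    ring
  have hexp : x * (1 - y) ^ k ≤ exp (-(k : ℝ) * y) :=
    calc x * (1 - y) ^ k ≤ (1 - y) ^ k :=
          mul_le_of_le_one_left (pow_nonneg (sub_nonneg.2 hy1) k) hx1
      _ ≤ exp (-(k : ℝ) * y) := one_sub_pow_le_exp_neg_mul hy1 k
  linarith

theorem stmt_0 (x y : ℝ) (hx0 : 0 ≤ x) (hx1 : x ≤ 1) (hy0 : 0 ≤ y) (hy1 : y ≤ 1)
    (k : ℕ) (hk : 0 < k) :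
    (1 - x * y) ^ k ≤ 1 - x + Real.exp (-(k : ℝ) * y) :=
  stmt_0_general x y hx0 hx1 hy1 k
end

section
/- Let (H_D(m_D)) and (H_W(m_W)) be families of random matrices of sizes m_D×m_S and m_W×m_S with i.i.d. zero-mean unit-variance entries, so that (1/m_D)·H_Dᴴ H_D → I_{m_S} and (1/m_W)·H_Wᴴ H_W → I_{m_S} almost surely as m_D, m_W → ∞. If m_W/m_D → β > 0, then log det( I + (α²P/(m_S σ_W²)) H_Wᴴ H_W + (P/(m_S σ_D²)) H_Dᴴ H_D ) − log det( I + (α²P/(m_S σ_W²)) H_Wᴴ H_W ) → m_S·log( 1 + σ_W²/(β α² σ_D²) ) almost surely. -/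
/-!
With `a = α²P/(m_S σ_W²)`, `b = P/(m_S σ_D²)` and `t = a m_W`, the laws of large numbers and
`m_W / m_D → β` give `t⁻¹ (I + a H_Wᴴ H_W + b H_Dᴴ H_D) → (1 + b/(aβ)) I` and
`t⁻¹ (I + a H_Wᴴ H_W) → I`. Rescaling by `t` shifts both `log det`s by the same `m_S log t`,
which cancels in the difference, and continuity of `log ∘ det` at the positive definite limits
gives `m_S log (1 + b/(aβ))`, where `b/(aβ) = σ_W²/(β α² σ_D²)`.
-/

open Matrix Filter Topology

section Rescaling

variable {E : Type*} [AddCommGroup E] [Module ℂ E] [TopologicalSpace E] [ContinuousSMul ℂ E]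
  {ι : Type*} {l : Filter ι}

lemma tendsto_inv_smul_const_add [ContinuousAdd E] {s : ι → ℝ} (hs : Tendsto s l atTop)
    (v : E) {X : ι → E} {L : E} (hX : Tendsto (fun k => ((s k : ℂ))⁻¹ • X k) l (𝓝 L)) :
    Tendsto (fun k => ((s k : ℂ))⁻¹ • (v + X k)) l (𝓝 L) := by
  have hs0 : Tendsto (fun k => ((s k : ℂ))⁻¹) l (𝓝 0) := by
    simpa [Function.comp_def] using
      (Complex.continuous_ofReal.tendsto 0).comp hs.inv_tendsto_atTop
  simpa [smul_add] using (hs0.smul_const v).add hX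

lemma tendsto_inv_smul_of_tendsto_div {x y : ι → ℝ} {X : ι → E} {L : E} {r : ℝ}
    (hx : ∀ᶠ k in l, x k ≠ 0) (hX : Tendsto (fun k => ((x k : ℂ))⁻¹ • X k) l (𝓝 L))
    (hr : Tendsto (fun k => x k / y k) l (𝓝 r)) :
    Tendsto (fun k => ((y k : ℂ))⁻¹ • X k) l (𝓝 ((r : ℂ) • L)) := by
  have hr' : Tendsto (fun k => ((x k / y k : ℝ) : ℂ)) l (𝓝 (r : ℂ)) :=
    (Complex.continuous_ofReal.tendsto r).comp hr
  refine (hr'.smul hX).congr' ?_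
  filter_upwards [hx] with k hk
  rw [smul_smul, Complex.ofReal_div, div_eq_mul_inv, mul_right_comm,
    mul_inv_cancel₀ (by exact_mod_cast hk), one_mul]

end Rescaling

lemma Matrix.re_det_ofReal_smul {n : Type*} [Fintype n] [DecidableEq n] (r : ℝ)
    (X : Matrix n n ℂ) : (((r : ℂ) • X).det).re = r ^ Fintype.card n * X.det.re := by
  rw [det_smul, ← Complex.ofReal_pow, Complex.re_ofReal_mul]

lemma tendsto_log_re_det_sub_of_inv_smul_tendsto {n : Type*} [Fintype n] [DecidableEq n]
    {ι : Type*} {l : Filter ι} {s : ι → ℝ} {X : ι → Matrix n n ℂ} {L : Matrix n n ℂ}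
    (hs : ∀ᶠ k in l, 0 < s k) (hX : Tendsto (fun k => ((s k : ℂ))⁻¹ • X k) l (𝓝 L))
    (hL : 0 < L.det.re) :
    Tendsto (fun k => Real.log (X k).det.re - Fintype.card n * Real.log (s k)) l
      (𝓝 (Real.log L.det.re)) := by
  have hdet : Tendsto (fun k => (((s k : ℂ))⁻¹ • X k).det.re) l (𝓝 L.det.re) :=
    ((Complex.continuous_re.comp continuous_id.matrix_det).tendsto L).comp hX
  refine ((Real.continuousAt_log hL.ne').tendsto.comp hdet).congr' ?_
  filter_upwards [hs, hdet.eventually (eventually_gt_nhds hL)] with k hsk hpos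
  have hXk : X k = (s k : ℂ) • (((s k : ℂ))⁻¹ • X k) :=
    (smul_inv_smul₀ (by exact_mod_cast hsk.ne') _).symm
  rw [Function.comp_apply, hXk, Matrix.re_det_ofReal_smul,
    Real.log_mul (pow_ne_zero _ hsk.ne') hpos.ne', Real.log_pow,
    inv_smul_smul₀ (by exact_mod_cast hsk.ne')]
  ring

lemma tendsto_log_re_det_one_add_add_sub {n : Type*} [Fintype n] [DecidableEq n] {ι : Type*}
    {l : Filter ι} {a b β : ℝ} (ha : 0 < a) (hβ : β ≠ 0) (hc : 0 < 1 + b / (a * β))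
    {dW dD : ι → ℝ} (hdW : Tendsto dW l atTop) (hdD : ∀ᶠ k in l, dD k ≠ 0)
    (hratio : Tendsto (fun k => dW k / dD k) l (𝓝 β)) {A B : ι → Matrix n n ℂ}
    (hA : Tendsto (fun k => ((dW k : ℂ))⁻¹ • A k) l (𝓝 1))
    (hB : Tendsto (fun k => ((dD k : ℂ))⁻¹ • B k) l (𝓝 1)) :
    Tendsto (fun k => Real.log (1 + (a : ℂ) • A k + (b : ℂ) • B k).det.re
        - Real.log (1 + (a : ℂ) • A k).det.re) l
      (𝓝 (Fintype.card n * Real.log (1 + b / (a * β)))) := by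
  set t : ι → ℝ := fun k => a * dW k
  have ht : Tendsto t l atTop := hdW.const_mul_atTop ha
  have hA' : Tendsto (fun k => ((t k : ℂ))⁻¹ • ((a : ℂ) • A k)) l (𝓝 1) := by
    refine hA.congr fun k => ?_
    rw [smul_smul, Complex.ofReal_mul, mul_inv, mul_right_comm,
      inv_mul_cancel₀ (by exact_mod_cast ha.ne'), one_mul]
  have hB' : Tendsto (fun k => ((t k : ℂ))⁻¹ • ((b : ℂ) • B k)) l
      (𝓝 (((b / (a * β) : ℝ) : ℂ) • 1)) := by
    have hr : Tendsto (fun k => dD k / (t k / b)) l (𝓝 (b / (a * β))) := by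
      rw [div_mul_eq_div_div, div_eq_mul_inv (b / a)]
      refine ((hratio.inv₀ hβ).const_mul (b / a)).congr fun k => ?_
      simp only [t, inv_div, div_div_eq_mul_div]
      ring
    refine (tendsto_inv_smul_of_tendsto_div hdD hB hr).congr fun k => ?_
    rw [smul_smul, Complex.ofReal_div, inv_div, div_eq_inv_mul]
  have hN := tendsto_inv_smul_const_add ht 1 hA'
  have hM : Tendsto (fun k => ((t k : ℂ))⁻¹ • (1 + (a : ℂ) • A k + (b : ℂ) • B k)) l
      (𝓝 (((1 + b / (a * β) : ℝ) : ℂ) • 1)) := by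
    simp only [smul_add, Complex.ofReal_add, Complex.ofReal_one, add_smul, one_smul] at hN hB' ⊢
    exact hN.add hB'
  have hpos : ∀ᶠ k in l, 0 < t k := ht.eventually_gt_atTop 0
  have hlogM := tendsto_log_re_det_sub_of_inv_smul_tendsto hpos hM
    (by rw [Matrix.re_det_ofReal_smul]; simp; positivity)
  have hlogN := tendsto_log_re_det_sub_of_inv_smul_tendsto hpos hN (by simp)
  convert hlogM.sub hlogN using 1
  · ext k
    ring
  · rw [Matrix.re_det_ofReal_smul]
    simp [Real.log_pow]

theorem stmt_18 {mS : ℕ} (hmS : 0 < mS)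
    (α P σD2 σW2 β : ℝ) (hα : 0 < α) (hP : 0 < P) (hσD : 0 < σD2) (hσW : 0 < σW2) (hβ : 0 < β)
    (mD mW : ℕ → ℕ) (hmD : Tendsto mD atTop atTop) (hmW : Tendsto mW atTop atTop)
    (HD : (k : ℕ) → Matrix (Fin (mD k)) (Fin mS) ℂ)
    (HW : (k : ℕ) → Matrix (Fin (mW k)) (Fin mS) ℂ)
    -- law of large numbers: (1/m_D) H_Dᴴ H_D → I and (1/m_W) H_Wᴴ H_W → I
    (hLLN_D : Tendsto (fun k => (((mD k : ℝ) : ℂ))⁻¹ • ((HD k)ᴴ * HD k)) atTop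
      (nhds (1 : Matrix (Fin mS) (Fin mS) ℂ)))
    (hLLN_W : Tendsto (fun k => (((mW k : ℝ) : ℂ))⁻¹ • ((HW k)ᴴ * HW k)) atTop
      (nhds (1 : Matrix (Fin mS) (Fin mS) ℂ)))
    -- m_W / m_D → β
    (hratio : Tendsto (fun k => (mW k : ℝ) / (mD k : ℝ)) atTop (nhds β)) :
    Tendsto (fun k =>
        Real.log ((((1 : Matrix (Fin mS) (Fin mS) ℂ)
            + ((α ^ 2 * P / (mS * σW2) : ℝ) : ℂ) • ((HW k)ᴴ * HW k)
            + ((P / (mS * σD2) : ℝ) : ℂ) • ((HD k)ᴴ * HD k)).det).re)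
          - Real.log ((((1 : Matrix (Fin mS) (Fin mS) ℂ)
            + ((α ^ 2 * P / (mS * σW2) : ℝ) : ℂ) • ((HW k)ᴴ * HW k)).det).re))
      atTop
      (nhds ((mS : ℝ) * Real.log (1 + σW2 / (β * α ^ 2 * σD2)))) := by
  have hmS' : (0 : ℝ) < mS := by exact_mod_cast hmS
  have hmD0 : ∀ᶠ k in atTop, (mD k : ℝ) ≠ 0 :=
    (hmD.eventually_ne_atTop 0).mono fun k hk => Nat.cast_ne_zero.mpr hk
  convert tendsto_log_re_det_one_add_add_sub (a := α ^ 2 * P / (mS * σW2))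
    (b := P / (mS * σD2)) (by positivity) hβ.ne' (by positivity)
    (tendsto_natCast_atTop_atTop.comp hmW) hmD0 hratio hLLN_W hLLN_D using 3
  · simp
  · field_simp
end

section
/- Let A, B be m_S×m_S positive semidefinite Hermitian complex matrices with A invertible. Then the function α ↦ log det(I + α·A + B) − log det(I + α·A) is decreasing in α > 0 and lim_{α→∞} [log det(I + αA + B) − log det(I + αA)] = 0. -/
open Matrix Filter
open scoped ComplexOrder
open scoped MatrixOrder

namespace Stmt19Aux

variable {m : ℕ}

lemma det_re_pos {P : Matrix (Fin m) (Fin m) ℂ} (hP : P.PosDef) :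
    0 < P.det.re := by
  have h := hP.det_pos
  rw [Complex.lt_def] at h
  simpa using h.1

lemma det_im_zero {P : Matrix (Fin m) (Fin m) ℂ} (hP : P.PosDef) :
    P.det.im = 0 := by
  have h := hP.det_pos
  rw [Complex.lt_def] at h
  simpa using h.2.symm

lemma smul_psd {A : Matrix (Fin m) (Fin m) ℂ} (hA : A.PosSemidef) {α : ℝ} (hα : 0 ≤ α) :
    ((α : ℂ) • A).PosSemidef := by
  constructor
  · show ((α : ℂ) • A)ᴴ = _
    rw [conjTranspose_smul, hA.1.eq]
    congr 1
    simp [Complex.star_def, Complex.conj_ofReal]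
  · intro x
    have h0 : (0:ℂ) ≤ (α : ℂ) := by exact_mod_cast hα
    exact (hA.smul h0).2 x

lemma det_one_add_psd {R : Matrix (Fin m) (Fin m) ℂ} (hR : R.PosSemidef) :
    ∃ c : ℝ, 1 ≤ c ∧ ((1 : Matrix (Fin m) (Fin m) ℂ) + R).det = (c : ℂ) := by
  refine ⟨∏ i, (1 + hR.1.eigenvalues i), ?_, ?_⟩
  · calc (1:ℝ) = ∏ _i : Fin m, 1 := by simp
      _ ≤ ∏ i, (1 + hR.1.eigenvalues i) :=
        Finset.prod_le_prod (by simp) fun i _ => by linarith [hR.eigenvalues_nonneg i]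
  · set U : Matrix (Fin m) (Fin m) ℂ := (hR.1.eigenvectorUnitary : Matrix (Fin m) (Fin m) ℂ) with hU
    have hU1 : U * star U = 1 := Matrix.mem_unitaryGroup_iff.mp hR.1.eigenvectorUnitary.2
    have hrep : (1 : Matrix (Fin m) (Fin m) ℂ) + R
        = U * (1 + diagonal (RCLike.ofReal ∘ hR.1.eigenvalues)) * star U := by
      rw [mul_add, add_mul, mul_one, hU1]
      congr 1
      exact hR.1.spectral_theorem
    rw [hrep, det_mul, det_mul]
    have hUdet : U.det * (star U).det = 1 := by rw [← det_mul, hU1, det_one]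
    have : U.det * ((1 : Matrix (Fin m) (Fin m) ℂ) + diagonal (RCLike.ofReal ∘ hR.1.eigenvalues)).det * (star U).det
        = ((1 : Matrix (Fin m) (Fin m) ℂ) + diagonal (RCLike.ofReal ∘ hR.1.eigenvalues)).det := by
      rw [mul_comm U.det, mul_assoc, hUdet, mul_one]
    rw [this, ← diagonal_one, diagonal_add, det_diagonal]
    push_cast
    rfl

lemma det_re_le_det_add_re {P Q : Matrix (Fin m) (Fin m) ℂ} (hP : P.PosDef) (hQ : Q.PosSemidef) :
    P.det.re ≤ (P + Q).det.re := by
  set T := CFC.sqrt P with hT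
  have hTpsd := (CFC.sqrt_nonneg P).posSemidef
  have hTT : T * T = P := CFC.sqrt_mul_sqrt_self P hP.posSemidef.nonneg
  have hPdet : IsUnit P.det := hP.det_pos.ne'.isUnit
  have hdet : IsUnit T.det := by
    have h : T.det * T.det = P.det := by rw [← det_mul, hTT]
    exact isUnit_of_mul_isUnit_left (h ▸ hPdet)
  have hTinv : T * T⁻¹ = 1 := mul_nonsing_inv _ hdet
  have hTinv' : T⁻¹ * T = 1 := nonsing_inv_mul _ hdet
  have hTH : (T⁻¹)ᴴ = T⁻¹ := (hTpsd.1.inv).eq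
  have hRpsd : (T⁻¹ * Q * T⁻¹).PosSemidef := by
    have := hQ.conjTranspose_mul_mul_same (T⁻¹)
    rwa [hTH] at this
  have key : P + Q = T * ((1 : Matrix (Fin m) (Fin m) ℂ) + T⁻¹ * Q * T⁻¹) * T := by
    rw [mul_add, mul_one, add_mul]
    congr 1
    · exact hTT.symm
    · rw [← Matrix.mul_assoc, ← Matrix.mul_assoc, hTinv, Matrix.one_mul, Matrix.mul_assoc,
        hTinv', Matrix.mul_one]
  obtain ⟨c, hc1, hc⟩ := det_one_add_psd hRpsd
  have hdetPQ : (P + Q).det = P.det * (c : ℂ) := by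
    rw [key, det_mul, det_mul, hc, ← hTT, det_mul]
    ring
  have him := det_im_zero hP
  have hre : (P + Q).det.re = P.det.re * c := by
    rw [hdetPQ]
    simp [Complex.mul_re, him]
  rw [hre]
  exact le_mul_of_one_le_right (det_re_pos hP).le hc1

variable {A : Matrix (Fin m) (Fin m) ℂ}

lemma inv_sub_inv_psd (hA : A.PosSemidef) {a b : ℝ} (ha : 0 ≤ a) (hab : a ≤ b) :
    (((1 : Matrix (Fin m) (Fin m) ℂ) + (a : ℂ) • A)⁻¹
      - ((1 : Matrix (Fin m) (Fin m) ℂ) + (b : ℂ) • A)⁻¹).PosSemidef := by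
  set U : Matrix (Fin m) (Fin m) ℂ := (hA.1.eigenvectorUnitary : Matrix (Fin m) (Fin m) ℂ) with hU
  set μ : Fin m → ℝ := hA.1.eigenvalues with hμ
  have hμ0 : ∀ i, 0 ≤ μ i := hA.eigenvalues_nonneg
  have hU1 : U * star U = 1 := Matrix.mem_unitaryGroup_iff.mp hA.1.eigenvectorUnitary.2
  have hU2 : star U * U = 1 := Matrix.mem_unitaryGroup_iff'.mp hA.1.eigenvectorUnitary.2
  have hrep : ∀ α : ℝ, (1 : Matrix (Fin m) (Fin m) ℂ) + (α : ℂ) • A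
      = U * diagonal (fun i => ((1 + α * μ i : ℝ) : ℂ)) * star U := by
    intro α
    have hd : (1 : Matrix (Fin m) (Fin m) ℂ) + (α : ℂ) • diagonal (RCLike.ofReal ∘ μ)
        = diagonal (fun i => ((1 + α * μ i : ℝ) : ℂ)) := by
      rw [← diagonal_one, ← diagonal_smul, diagonal_add]
      funext i
      push_cast
      simp [Function.comp]
    rw [← hd, mul_add, add_mul, mul_one, hU1, Matrix.mul_smul, Matrix.smul_mul]
    congr 2
    exact hA.1.spectral_theorem
  have hinv : ∀ α : ℝ, 0 ≤ α →
      ((1 : Matrix (Fin m) (Fin m) ℂ) + (α : ℂ) • A)⁻¹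
        = U * diagonal (fun i => (((1 + α * μ i)⁻¹ : ℝ) : ℂ)) * star U := by
    intro α hα
    apply Matrix.inv_eq_right_inv
    have hconj : ∀ D E : Matrix (Fin m) (Fin m) ℂ,
        (U * D * star U) * (U * E * star U) = U * (D * E) * star U := by
      intro D E
      simp only [Matrix.mul_assoc]
      rw [← Matrix.mul_assoc (star U) U (E * star U), hU2, Matrix.one_mul]
    have hfun : (fun i => ((1 + α * μ i : ℝ) : ℂ) * (((1 + α * μ i)⁻¹ : ℝ) : ℂ))
        = fun _ => (1:ℂ) := by
      funext i
      have hpos : (0:ℝ) < 1 + α * μ i := by nlinarith [mul_nonneg hα (hμ0 i)]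
      rw [← Complex.ofReal_mul, mul_inv_cancel₀ hpos.ne', Complex.ofReal_one]
    rw [hrep α, hconj, diagonal_mul_diagonal, hfun, diagonal_one, Matrix.mul_one, hU1]
  have hb0 : 0 ≤ b := le_trans ha hab
  rw [hinv a ha, hinv b hb0]
  have hdiff : U * diagonal (fun i => (((1 + a * μ i)⁻¹ : ℝ) : ℂ)) * star U
      - U * diagonal (fun i => (((1 + b * μ i)⁻¹ : ℝ) : ℂ)) * star U
      = U * diagonal (fun i => (((1 + a * μ i)⁻¹ - (1 + b * μ i)⁻¹ : ℝ) : ℂ)) * star U := by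
    rw [← Matrix.sub_mul, ← Matrix.mul_sub, diagonal_sub]
    push_cast
    rfl
  rw [hdiff]
  have hdpsd : (diagonal (fun i => (((1 + a * μ i)⁻¹ - (1 + b * μ i)⁻¹ : ℝ) : ℂ))).PosSemidef := by
    refine posSemidef_diagonal_iff.mpr fun i => ?_
    rw [Complex.zero_le_real]
    have h1 : (0:ℝ) < 1 + a * μ i := by nlinarith [mul_nonneg ha (hμ0 i)]
    have h2 : (1:ℝ) + a * μ i ≤ 1 + b * μ i := by nlinarith [hμ0 i]
    have h3 : (1 + b * μ i)⁻¹ ≤ (1 + a * μ i)⁻¹ := by gcongr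
    linarith
  have := hdpsd.mul_mul_conjTranspose_same U
  rwa [← Matrix.star_eq_conjTranspose] at this

end Stmt19Aux

theorem stmt_19 {mS : ℕ} (A B : Matrix (Fin mS) (Fin mS) ℂ)
    (hA : A.PosSemidef) (hAinv : IsUnit A.det) (hB : B.PosSemidef) :
    AntitoneOn (fun α : ℝ =>
        Real.log (((1 : Matrix (Fin mS) (Fin mS) ℂ) + (α : ℂ) • A + B).det.re)
          - Real.log (((1 : Matrix (Fin mS) (Fin mS) ℂ) + (α : ℂ) • A).det.re))
      (Set.Ioi (0 : ℝ))
    ∧ Tendsto (fun α : ℝ =>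
        Real.log (((1 : Matrix (Fin mS) (Fin mS) ℂ) + (α : ℂ) • A + B).det.re)
          - Real.log (((1 : Matrix (Fin mS) (Fin mS) ℂ) + (α : ℂ) • A).det.re))
      atTop (nhds 0) := by
  classical
  set S := CFC.sqrt B with hS
  have hSH : Sᴴ = S := (CFC.sqrt_nonneg B).posSemidef.1
  have hMpd : ∀ α : ℝ, 0 ≤ α → ((1 : Matrix (Fin mS) (Fin mS) ℂ) + (α : ℂ) • A).PosDef :=
    fun α hα => Matrix.PosDef.one.add_posSemidef (Stmt19Aux.smul_psd hA hα)
  have hXpsd : ∀ α : ℝ, 0 ≤ α →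
      (S * ((1 : Matrix (Fin mS) (Fin mS) ℂ) + (α:ℂ) • A)⁻¹ * S).PosSemidef := by
    intro α hα
    have := (hMpd α hα).inv.posSemidef.mul_mul_conjTranspose_same S
    rwa [hSH] at this
  have h1X : ∀ α : ℝ, 0 ≤ α →
      ((1 : Matrix (Fin mS) (Fin mS) ℂ)
        + S * ((1 : Matrix (Fin mS) (Fin mS) ℂ) + (α:ℂ) • A)⁻¹ * S).PosDef :=
    fun α hα => Matrix.PosDef.one.add_posSemidef (hXpsd α hα)
  have hsplit : ∀ α : ℝ, 0 ≤ α →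
      ((1 : Matrix (Fin mS) (Fin mS) ℂ) + (α:ℂ) • A + B).det
        = ((1 : Matrix (Fin mS) (Fin mS) ℂ) + (α:ℂ) • A).det
          * ((1 : Matrix (Fin mS) (Fin mS) ℂ)
              + S * ((1 : Matrix (Fin mS) (Fin mS) ℂ) + (α:ℂ) • A)⁻¹ * S).det := by
    intro α hα
    have hM := hMpd α hα
    have hu : IsUnit (((1 : Matrix (Fin mS) (Fin mS) ℂ) + (α:ℂ) • A).det) :=
      hM.det_pos.ne'.isUnit
    have h1 : (1 : Matrix (Fin mS) (Fin mS) ℂ) + (α:ℂ) • A + B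
        = ((1 : Matrix (Fin mS) (Fin mS) ℂ) + (α:ℂ) • A)
          * (1 + ((1 : Matrix (Fin mS) (Fin mS) ℂ) + (α:ℂ) • A)⁻¹ * B) := by
      rw [mul_add, mul_one, ← Matrix.mul_assoc, mul_nonsing_inv _ hu, Matrix.one_mul]
    rw [h1, det_mul]
    congr 1
    have h2 : ((1 : Matrix (Fin mS) (Fin mS) ℂ) + (α:ℂ) • A)⁻¹ * B
        = (((1 : Matrix (Fin mS) (Fin mS) ℂ) + (α:ℂ) • A)⁻¹ * S) * S := by
      rw [Matrix.mul_assoc, CFC.sqrt_mul_sqrt_self B hB.nonneg]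
    conv_lhs => rw [h2, Matrix.det_one_add_mul_comm, ← Matrix.mul_assoc]
  have hre : ∀ α : ℝ, 0 ≤ α →
      ((1 : Matrix (Fin mS) (Fin mS) ℂ) + (α:ℂ) • A + B).det.re
        = ((1 : Matrix (Fin mS) (Fin mS) ℂ) + (α:ℂ) • A).det.re
          * ((1 : Matrix (Fin mS) (Fin mS) ℂ)
              + S * ((1 : Matrix (Fin mS) (Fin mS) ℂ) + (α:ℂ) • A)⁻¹ * S).det.re := by
    intro α hα
    rw [hsplit α hα, Complex.mul_re, Stmt19Aux.det_im_zero (hMpd α hα)]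
    ring
  have flog : ∀ α : ℝ, 0 < α →
      Real.log (((1 : Matrix (Fin mS) (Fin mS) ℂ) + (α:ℂ) • A + B).det.re)
          - Real.log (((1 : Matrix (Fin mS) (Fin mS) ℂ) + (α:ℂ) • A).det.re)
        = Real.log (((1 : Matrix (Fin mS) (Fin mS) ℂ)
            + S * ((1 : Matrix (Fin mS) (Fin mS) ℂ) + (α:ℂ) • A)⁻¹ * S).det.re) := by
    intro α hα
    rw [hre α hα.le,
      Real.log_mul (Stmt19Aux.det_re_pos (hMpd α hα.le)).ne'
        (Stmt19Aux.det_re_pos (h1X α hα.le)).ne']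
    ring
  constructor
  · intro a ha b hb hab
    simp only [Set.mem_Ioi] at ha hb
    simp only []
    rw [flog a ha, flog b hb]
    have hdiffinv := Stmt19Aux.inv_sub_inv_psd hA ha.le hab
    have hdiffX : (S * (((1 : Matrix (Fin mS) (Fin mS) ℂ) + (a:ℂ) • A)⁻¹
        - ((1 : Matrix (Fin mS) (Fin mS) ℂ) + (b:ℂ) • A)⁻¹) * S).PosSemidef := by
      have := hdiffinv.mul_mul_conjTranspose_same S
      rwa [hSH] at this
    have heq : (1 : Matrix (Fin mS) (Fin mS) ℂ)
          + S * ((1 : Matrix (Fin mS) (Fin mS) ℂ) + (a:ℂ) • A)⁻¹ * S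
        = ((1 : Matrix (Fin mS) (Fin mS) ℂ)
            + S * ((1 : Matrix (Fin mS) (Fin mS) ℂ) + (b:ℂ) • A)⁻¹ * S)
          + S * (((1 : Matrix (Fin mS) (Fin mS) ℂ) + (a:ℂ) • A)⁻¹
              - ((1 : Matrix (Fin mS) (Fin mS) ℂ) + (b:ℂ) • A)⁻¹) * S := by
      rw [Matrix.mul_sub, Matrix.sub_mul]
      abel
    apply Real.log_le_log (Stmt19Aux.det_re_pos (h1X b hb.le))
    calc ((1 : Matrix (Fin mS) (Fin mS) ℂ)
          + S * ((1 : Matrix (Fin mS) (Fin mS) ℂ) + (b:ℂ) • A)⁻¹ * S).det.re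
        ≤ (((1 : Matrix (Fin mS) (Fin mS) ℂ)
            + S * ((1 : Matrix (Fin mS) (Fin mS) ℂ) + (b:ℂ) • A)⁻¹ * S)
          + S * (((1 : Matrix (Fin mS) (Fin mS) ℂ) + (a:ℂ) • A)⁻¹
              - ((1 : Matrix (Fin mS) (Fin mS) ℂ) + (b:ℂ) • A)⁻¹) * S).det.re :=
          Stmt19Aux.det_re_le_det_add_re (h1X b hb.le) hdiffX
      _ = ((1 : Matrix (Fin mS) (Fin mS) ℂ)
          + S * ((1 : Matrix (Fin mS) (Fin mS) ℂ) + (a:ℂ) • A)⁻¹ * S).det.re := by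
          rw [← heq]
  · set Φ : ℝ → Matrix (Fin mS) (Fin mS) ℂ := fun t =>
      (t:ℂ) • (Ring.inverse ((t:ℂ) • (1 : Matrix (Fin mS) (Fin mS) ℂ) + A).det
        • ((t:ℂ) • (1 : Matrix (Fin mS) (Fin mS) ℂ) + A).adjugate) with hΦ
    have hclin : Continuous fun t : ℝ => (t:ℂ) • (1 : Matrix (Fin mS) (Fin mS) ℂ) + A :=
      (Complex.continuous_ofReal.smul continuous_const).add continuous_const
    have hΦcont : ContinuousAt Φ 0 := by
      have hdet0 : (((0:ℝ):ℂ) • (1 : Matrix (Fin mS) (Fin mS) ℂ) + A).det ≠ 0 := by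
        simpa using hAinv.ne_zero
      refine ContinuousAt.smul Complex.continuous_ofReal.continuousAt
        (ContinuousAt.smul (f := fun t : ℝ =>
          Ring.inverse (((t:ℂ) • (1 : Matrix (Fin mS) (Fin mS) ℂ) + A).det)) ?_
          hclin.matrix_adjugate.continuousAt)
      have h1 : ContinuousAt
          (fun t : ℝ => (((t:ℂ) • (1 : Matrix (Fin mS) (Fin mS) ℂ) + A).det)⁻¹) 0 :=
        hclin.matrix_det.continuousAt.inv₀ hdet0
      simpa [Ring.inverse_eq_inv] using h1
    have hΦ0 : Φ 0 = 0 := by simp [hΦ]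
    have hMinv : ∀ α : ℝ, 0 < α →
        ((1 : Matrix (Fin mS) (Fin mS) ℂ) + (α:ℂ) • A)⁻¹ = Φ α⁻¹ := by
      intro α hα
      have hαne : (α:ℂ) ≠ 0 := by exact_mod_cast hα.ne'
      have hNpd : ((((α⁻¹ : ℝ)):ℂ) • (1 : Matrix (Fin mS) (Fin mS) ℂ) + A).PosDef := by
        apply Matrix.PosDef.add_posSemidef _ hA
        rw [smul_one_eq_diagonal]
        exact Matrix.posDef_diagonal_iff.mpr fun i =>
          Complex.zero_lt_real.mpr (inv_pos.mpr hα)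
      have hNu : IsUnit (((((α⁻¹ : ℝ)):ℂ) • (1 : Matrix (Fin mS) (Fin mS) ℂ) + A).det) :=
        hNpd.det_pos.ne'.isUnit
      have hdecomp : (1 : Matrix (Fin mS) (Fin mS) ℂ) + (α:ℂ) • A
          = (α:ℂ) • ((((α⁻¹ : ℝ)):ℂ) • (1 : Matrix (Fin mS) (Fin mS) ℂ) + A) := by
        rw [smul_add, smul_smul, ← Complex.ofReal_mul, mul_inv_cancel₀ hα.ne',
          Complex.ofReal_one, one_smul]
      haveI : Invertible (α:ℂ) := invertibleOfNonzero hαne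
      rw [hdecomp, Matrix.inv_smul (k := (α:ℂ)) (h := hNu), Matrix.inv_def, invOf_eq_inv, hΦ]
      rw [← Complex.ofReal_inv]
    have hinvT : Tendsto (fun α : ℝ =>
        ((1 : Matrix (Fin mS) (Fin mS) ℂ) + (α:ℂ) • A)⁻¹) atTop (nhds 0) := by
      have h1 : Tendsto (fun α : ℝ => Φ α⁻¹) atTop (nhds 0) := by
        rw [← hΦ0]
        exact hΦcont.tendsto.comp tendsto_inv_atTop_zero
      refine Tendsto.congr' ?_ h1
      filter_upwards [eventually_gt_atTop (0:ℝ)] with α hα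
      exact (hMinv α hα).symm
    have hc : Continuous (fun N : Matrix (Fin mS) (Fin mS) ℂ =>
        ((1 : Matrix (Fin mS) (Fin mS) ℂ) + S * N * S).det.re) :=
      Complex.continuous_re.comp
        ((continuous_const.add
          ((continuous_const.matrix_mul continuous_id).matrix_mul continuous_const)).matrix_det)
    have h2 := (hc.continuousAt (x := 0)).tendsto.comp hinvT
    simp only [Matrix.mul_zero, Matrix.zero_mul, add_zero, det_one, Complex.one_re] at h2
    have h3 := (Real.continuousAt_log one_ne_zero).tendsto.comp h2
    rw [Real.log_one] at h3
    refine Tendsto.congr' ?_ h3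
    filter_upwards [eventually_gt_atTop (0:ℝ)] with α hα
    exact (flog α hα).symm
end
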